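/- arXiv:1207.1257 — 2 statements merged into one kernel-verified Lean document; each statement's English description precedes it below -/
import Mathlib

section
/- If M ⊆ λ(Φ) is an irreducible hitting set of the collection LMES(Φ) of all LMESes of Φ, then M is a co-LMNS of Φ, i.e., λ(Φ) ∖ M is an LMNS of Φ. (Assume λ(Φ) ≠ ∅, and if Φ has unlabelled clauses then at least one label of Φ is irredundant.) -/
/-!
An LMES avoiding `M` would lie inside `λ(Φ) ∖ M`, so a hitting set of the LMESes leaves a
non-equivalent complement. Irreducibility of `M` gives, for each `l ∈ M`, an LMES meeting `M`
exactly in `l`; that LMES lies inside `insert l (λ(Φ) ∖ M)`, so adding any label of `M` back to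
the complement restores equivalence.
-/

namespace LCNFStmt

/-- A clause is a finite set of literals (variable, polarity). -/
abbrev Clause (V : Type) := Finset (V × Bool)

def ClauseSat {V : Type} (τ : V → Bool) (c : Clause V) : Prop :=
  ∃ p ∈ c, τ p.1 = p.2

/-- τ is a model of a CNF formula (finite set of clauses). -/
def Sat {V : Type} (τ : V → Bool) (F : Finset (Clause V)) : Prop :=
  ∀ c ∈ F, ClauseSat τ c

/-- Logical equivalence of CNF formulas: same models. -/
def Equiv {V : Type} (F₁ F₂ : Finset (Clause V)) : Prop :=
  ∀ τ, Sat τ F₁ ↔ Sat τ F₂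

/-- F₁ implies F₂: every model of F₁ is a model of F₂. -/
def Implies {V : Type} (F₁ F₂ : Finset (Clause V)) : Prop :=
  ∀ τ, Sat τ F₁ → Sat τ F₂

/-- A labelled CNF formula: a CNF formula together with a labelling function. -/
structure LCNF (V L : Type) where
  F : Finset (Clause V)
  lab : Clause V → Finset L

variable {V L : Type} [DecidableEq V] [DecidableEq L]

/-- The set of active labels λ(Φ). -/
def LCNF.active (Φ : LCNF V L) : Finset L := Φ.F.biUnion Φ.lab

/-- Clause set of the induced subformula Φ|_S : clauses all of whose labels lie in S. -/
def LCNF.restrict (Φ : LCNF V L) (S : Finset L) : Finset (Clause V) :=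
  Φ.F.filter (fun c => Φ.lab c ⊆ S)

/-- Φ|_S ≡ Φ. -/
def LCNF.EquivTo (Φ : LCNF V L) (S : Finset L) : Prop :=
  Equiv (Φ.restrict S) Φ.F

/-- A label is redundant in Φ if removing it keeps the formula equivalent. -/
def LCNF.Redundant (Φ : LCNF V L) (l : L) : Prop :=
  Φ.EquivTo (Φ.active.erase l)

/-- Labelled minimal equivalent subset. -/
def LCNF.LMES (Φ : LCNF V L) (S : Finset L) : Prop :=
  S ⊆ Φ.active ∧ Φ.EquivTo S ∧ ∀ S' ⊂ S, ¬ Φ.EquivTo S'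

/-- Labelled maximal non-equivalent subset. -/
def LCNF.LMNS (Φ : LCNF V L) (S : Finset L) : Prop :=
  S ⊆ Φ.active ∧ ¬ Φ.EquivTo S ∧ ∀ S', S ⊂ S' → S' ⊆ Φ.active → Φ.EquivTo S'

/-- Labelled maximal satisfiable subset. -/
def LCNF.LMSS (Φ : LCNF V L) (S : Finset L) : Prop :=
  S ⊆ Φ.active ∧ (∃ τ, Sat τ (Φ.restrict S)) ∧
    ∀ S', S ⊂ S' → S' ⊆ Φ.active → ¬ ∃ τ, Sat τ (Φ.restrict S')

/-- Hitting set of a collection of finite sets. -/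
def HittingSet {α : Type} [DecidableEq α] (𝒮 : Set (Finset α)) (H : Finset α) : Prop :=
  ∀ A ∈ 𝒮, (H ∩ A).Nonempty

/-- Irreducible hitting set. -/
def IrredHittingSet {α : Type} [DecidableEq α] (𝒮 : Set (Finset α)) (H : Finset α) : Prop :=
  HittingSet 𝒮 H ∧ ∀ H' ⊂ H, ¬ HittingSet 𝒮 H'

end LCNFStmt

namespace LCNFStmt

theorem IrredHittingSet.exists_inter_eq_singleton {α : Type} [DecidableEq α]
    {𝒮 : Set (Finset α)} {H : Finset α} (hH : IrredHittingSet 𝒮 H) {l : α} (hl : l ∈ H) :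
    ∃ A ∈ 𝒮, H ∩ A = {l} := by
  obtain ⟨A, hA, hmiss⟩ : ∃ A ∈ 𝒮, ¬ (H.erase l ∩ A).Nonempty := by
    simpa [HittingSet] using hH.2 _ (Finset.erase_ssubset hl)
  rw [Finset.not_nonempty_iff_eq_empty, Finset.erase_inter, Finset.erase_eq_empty_iff] at hmiss
  exact ⟨A, hA, hmiss.resolve_left (hH.1 A hA).ne_empty⟩

namespace LCNF

variable {V L : Type} [DecidableEq L] (Φ : LCNF V L)

theorem restrict_mono {S S' : Finset L} (h : S ⊆ S') : Φ.restrict S ⊆ Φ.restrict S' :=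
  Finset.monotone_filter_right _ fun _ _ hc => hc.trans h

theorem EquivTo.mono {Φ : LCNF V L} {S S' : Finset L} (hS : Φ.EquivTo S) (h : S ⊆ S') :
    Φ.EquivTo S' := fun τ =>
  ⟨fun hsat => (hS τ).1 fun c hc => hsat c (Φ.restrict_mono h hc),
    fun hsat c hc => hsat c (Finset.filter_subset _ _ hc)⟩

theorem EquivTo.exists_LMES_subset {Φ : LCNF V L} {S : Finset L} (hS : Φ.EquivTo S)
    (hact : S ⊆ Φ.active) : ∃ E ⊆ S, Φ.LMES E := by
  obtain ⟨E, hES, hmin⟩ := exists_minimal_le_of_wellFoundedLT Φ.EquivTo S hS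
  exact ⟨E, hES, hES.trans hact, hmin.prop, fun _ hlt => hmin.not_prop_of_lt hlt⟩

theorem not_equivTo_sdiff_of_hittingSet {M : Finset L} (hM : HittingSet {S | Φ.LMES S} M) :
    ¬ Φ.EquivTo (Φ.active \ M) := fun hequiv => by
  obtain ⟨E, hE, hLMES⟩ := hequiv.exists_LMES_subset Finset.sdiff_subset
  obtain ⟨l, hl⟩ := hM E hLMES
  rw [Finset.mem_inter] at hl
  exact (Finset.mem_sdiff.1 (hE hl.2)).2 hl.1

theorem equivTo_insert_sdiff_of_irredHittingSet {M : Finset L}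
    (hM : IrredHittingSet {S | Φ.LMES S} M) {l : L} (hl : l ∈ M) :
    Φ.EquivTo (insert l (Φ.active \ M)) := by
  obtain ⟨E, hLMES, hME⟩ := hM.exists_inter_eq_singleton hl
  refine hLMES.2.1.mono fun y hy => ?_
  by_cases hyM : y ∈ M
  · have : y ∈ M ∩ E := Finset.mem_inter.2 ⟨hyM, hy⟩
    rw [hME, Finset.mem_singleton] at this
    exact this ▸ Finset.mem_insert_self y _
  · exact Finset.mem_insert_of_mem (Finset.mem_sdiff.2 ⟨hLMES.1 hy, hyM⟩)

end LCNF

theorem irred_hs_of_lmes_is_colmns_general {V L : Type} [DecidableEq L]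
    (Φ : LCNF V L)
    (M : Finset L)
    (hhs : IrredHittingSet {S | Φ.LMES S} M) :
    Φ.LMNS (Φ.active \ M) := by
  refine ⟨Finset.sdiff_subset, Φ.not_equivTo_sdiff_of_hittingSet hhs.1, fun S' hlt hS' => ?_⟩
  obtain ⟨l, hlS', hl⟩ := Finset.exists_of_ssubset hlt
  have hlM : l ∈ M := by simpa [hS' hlS'] using hl
  exact (Φ.equivTo_insert_sdiff_of_irredHittingSet hhs hlM).mono
    (Finset.insert_subset hlS' hlt.subset)

theorem irred_hs_of_lmes_is_colmns {V L : Type} [DecidableEq V] [DecidableEq L]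
    (Φ : LCNF V L) (hne : Φ.active.Nonempty)
    (hunlab : (∃ c ∈ Φ.F, Φ.lab c = ∅) → ∃ l ∈ Φ.active, ¬ Φ.Redundant l)
    (M : Finset L) (hM : M ⊆ Φ.active)
    (hhs : IrredHittingSet {S | Φ.LMES S} M) :
    Φ.LMNS (Φ.active \ M) :=
  irred_hs_of_lmes_is_colmns_general Φ M hhs

end LCNFStmt
end

section
/- For a labelled CNF formula Φ satisfying the hypotheses of the duality theorem (λ(Φ) ≠ ∅, and if Φ has unlabelled clauses then at least one label is irredundant): ⋃ LMES(Φ) = λ(Φ) ∖ ⋂ LMNS(Φ). -/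
/-!
Enlarging `S` only adds clauses of `Φ` to `Φ|_S`, so `Φ|_S ≡ Φ` is an upward-closed
property `P` of subsets of `A = λ(Φ)`. For such `P`, if `S` is minimal with `P` and `l ∈ S`, then
`S ∖ {l}` fails `P` and extends to a maximal subset `T` of `A ∖ {l}` failing `P`; `T` is even
maximal in `A`, since any larger set either misses `l` or contains `T ∪ {l} ⊇ S`. Conversely, if
`T` is maximal failing `P` and `l ∉ T`, then `T ∪ {l}` has `P`, and any minimal `S ⊆ T ∪ {l}`
with `P` must contain `l`, as otherwise `S ⊆ T`.
-/

section UpwardClosed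

variable {α : Type*} [DecidableEq α] {P : Finset α → Prop}

theorem maximal_not_of_maximal_not_erase (hP : Monotone P) {A T : Finset α} {l : α}
    (hT : Maximal (fun U => U ⊆ A.erase l ∧ ¬ P U) T) (hins : P (insert l T)) :
    Maximal (fun U => U ⊆ A ∧ ¬ P U) T := by
  refine maximal_iff_forall_gt.2 ⟨⟨hT.1.1.trans (A.erase_subset l), hT.1.2⟩, ?_⟩
  rintro U hTU ⟨hUA, hPU⟩
  by_cases hlU : l ∈ U
  · exact hPU (hP (Finset.insert_subset hlU hTU.le) hins)
  · have hUA' : U ⊆ A.erase l := fun x hx =>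
      Finset.mem_erase.2 ⟨ne_of_mem_of_not_mem hx hlU, hUA hx⟩
    exact hT.not_gt ⟨hUA', hPU⟩ hTU

theorem exists_maximal_notMem_of_minimal_mem (hP : Monotone P) {A S : Finset α} {l : α}
    (hSA : S ⊆ A) (hS : Minimal P S) (hlS : l ∈ S) :
    ∃ T, Maximal (fun U => U ⊆ A ∧ ¬ P U) T ∧ l ∉ T := by
  have hfin : {U | U ⊆ A.erase l ∧ ¬ P U}.Finite :=
    (A.erase l).powerset.finite_toSet.subset fun U hU => Finset.mem_powerset.2 hU.1
  have hbase : S.erase l ⊆ A.erase l ∧ ¬ P (S.erase l) :=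
    ⟨Finset.erase_subset_erase l hSA, hS.not_prop_of_lt (Finset.erase_ssubset hlS)⟩
  obtain ⟨T, hST, hT⟩ := hfin.exists_le_maximal hbase
  have hSins : S ⊆ insert l T := by
    simpa [Finset.insert_erase hlS] using Finset.insert_subset_insert l hST
  exact ⟨T, maximal_not_of_maximal_not_erase hP hT (hP hSins hS.prop),
    fun hlT => (Finset.mem_erase.1 (hT.prop.1 hlT)).1 rfl⟩

theorem exists_minimal_mem_of_maximal_notMem (hP : Monotone P) {A T : Finset α} {l : α}
    (hlA : l ∈ A) (hT : Maximal (fun U => U ⊆ A ∧ ¬ P U) T) (hlT : l ∉ T) :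
    ∃ S ⊆ A, Minimal P S ∧ l ∈ S := by
  have hinsA : insert l T ⊆ A := Finset.insert_subset hlA hT.prop.1
  have hins : P (insert l T) := by
    by_contra h
    exact hT.not_gt ⟨hinsA, h⟩ (Finset.ssubset_insert hlT)
  obtain ⟨S, hST, hS⟩ := exists_minimal_le_of_wellFoundedLT P _ hins
  refine ⟨S, hST.trans hinsA, hS, ?_⟩
  by_contra hlS
  exact hT.prop.2 (hP (fun x hx => (Finset.mem_insert.1 (hST hx)).resolve_left
    (ne_of_mem_of_not_mem hx hlS)) hS.prop)

theorem exists_minimal_mem_iff_exists_maximal_notMem (hP : Monotone P) (A : Finset α)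
    (l : α) :
    (∃ S ⊆ A, Minimal P S ∧ l ∈ S) ↔
      l ∈ A ∧ ∃ T, Maximal (fun U => U ⊆ A ∧ ¬ P U) T ∧ l ∉ T := by
  constructor
  · rintro ⟨S, hSA, hS, hlS⟩
    exact ⟨hSA hlS, exists_maximal_notMem_of_minimal_mem hP hSA hS hlS⟩
  · rintro ⟨hlA, T, hT, hlT⟩
    exact exists_minimal_mem_of_maximal_notMem hP hlA hT hlT

end UpwardClosed

namespace LCNFStmt

variable {V L : Type} [DecidableEq L]

theorem Sat.mono {τ : V → Bool} {F₁ F₂ : Finset (Clause V)} (h : F₁ ⊆ F₂)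
    (hF₂ : Sat τ F₂) : Sat τ F₁ :=
  fun c hc => hF₂ c (h hc)

namespace LCNF

theorem restrict_subset (Φ : LCNF V L) (S : Finset L) : Φ.restrict S ⊆ Φ.F :=
  Finset.filter_subset _ _

theorem restrict_mono_s15 (Φ : LCNF V L) : Monotone Φ.restrict := by
  intro S T hST c hc
  simp only [restrict, Finset.mem_filter] at hc ⊢
  exact ⟨hc.1, hc.2.trans hST⟩

theorem equivTo_monotone (Φ : LCNF V L) : Monotone Φ.EquivTo :=
  fun _ _ hST hS τ =>
    ⟨fun hτ => (hS τ).1 (Sat.mono (Φ.restrict_mono_s15 hST) hτ), Sat.mono (Φ.restrict_subset _)⟩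

theorem lmes_iff {Φ : LCNF V L} {S : Finset L} :
    Φ.LMES S ↔ S ⊆ Φ.active ∧ Minimal Φ.EquivTo S := by
  rw [minimal_iff_forall_lt]
  rfl

theorem lmns_iff {Φ : LCNF V L} {S : Finset L} :
    Φ.LMNS S ↔ Maximal (fun T => T ⊆ Φ.active ∧ ¬ Φ.EquivTo T) S := by
  rw [maximal_iff_forall_gt]
  simp only [LMNS, not_and, not_not, and_assoc]

end LCNF

theorem union_lmes_eq_active_diff_inter_lmns_general {V L : Type} [DecidableEq L]
    (Φ : LCNF V L) :
    { l : L | ∃ S : Finset L, Φ.LMES S ∧ l ∈ S } =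
      { l : L | l ∈ Φ.active ∧ ∃ S : Finset L, Φ.LMNS S ∧ l ∉ S } := by
  ext l
  simpa only [Set.mem_ofPred_eq, LCNF.lmes_iff, LCNF.lmns_iff, and_assoc] using
    exists_minimal_mem_iff_exists_maximal_notMem Φ.equivTo_monotone Φ.active l

theorem union_lmes_eq_active_diff_inter_lmns {V L : Type} [DecidableEq V] [DecidableEq L]
    (Φ : LCNF V L) (hne : Φ.active.Nonempty)
    (hunlab : (∃ c ∈ Φ.F, Φ.lab c = ∅) → ∃ l ∈ Φ.active, ¬ Φ.Redundant l) :
    { l : L | ∃ S : Finset L, Φ.LMES S ∧ l ∈ S } =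
      { l : L | l ∈ Φ.active ∧ ∃ S : Finset L, Φ.LMNS S ∧ l ∉ S } :=
  union_lmes_eq_active_diff_inter_lmns_general Φ

end LCNFStmt
end
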